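/- arXiv:2205.14897 — 3 statements merged into one kernel-verified Lean document; each statement's English description precedes it below -/
import Mathlib

section
/- Let G be a weighted directed graph with a tree decomposition Φ = (T, {B_x}) rooted at r. For u ∈ V(G) define B↑(u) as the union of the bags B_{x'} over all ancestors x' of St(u) (including St(u) itself), where St(u) is the minimum-depth bag containing u. Then for any u, v ∈ V(G), the distance d_G(u,v) equals min over s ∈ B↑(u) ∩ B↑(v) of d_G(u,s) + d_G(s,v). -/
open Classical

/-- Cost of the walk from `u` following the vertex list `l` and required to end at `v`
(the last entry of a nonempty `l` must be `v` for the cost to be finite).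
Non-edges are encoded by cost `⊤`. -/
noncomputable def pathCost {V : Type*} (c : V → V → ℕ∞) : V → List V → V → ℕ∞
  | u, [], v => if u = v then 0 else ⊤
  | u, w :: l, v => c u w + pathCost c w l v

/-- Weighted shortest-path distance in the directed graph encoded by the cost function `c`. -/
noncomputable def ddist {V : Type*} (c : V → V → ℕ∞) (u v : V) : ℕ∞ :=
  ⨅ l : List V, pathCost c u l v

/-- The underlying undirected simple graph of the directed graph encoded by `c`. -/
def underlyingGraph {V : Type*} (c : V → V → ℕ∞) : SimpleGraph V where
  Adj a b := a ≠ b ∧ (c a b ≠ ⊤ ∨ c b a ≠ ⊤)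
  symm := ⟨by rintro a b ⟨hne, h⟩; exact ⟨hne.symm, h.symm⟩⟩
  loopless := ⟨by rintro a ⟨hne, _⟩; exact hne rfl⟩

/-- `x'` is an ancestor of `x` in the tree `T` rooted at `r` (including `x` itself). -/
def IsAnc {ι : Type*} (T : SimpleGraph ι) (r x' x : ι) : Prop :=
  T.dist r x' + T.dist x' x = T.dist r x

/-!
Let `m` be the meeting point of the tree paths from the root to `su ∋ u` and to `sv ∋ v`: it is an
ancestor of both and lies on every walk of `T` from `su` to `sv`. The bags containing a fixed
vertex `w ∉ B m` form a connected subtree avoiding `m`, so they all lie on the same side of `m`.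
Along a finite-cost walk from `u` to `v` in `G` consecutive vertices share a bag, so the side of
`m` on which the current vertex lives cannot change until the walk enters `B m`; as it starts on
the side of `su` and ends on the side of `sv`, it meets `B m`. Splitting it there bounds its cost
below by `d_G(u,s) + d_G(s,v)` with `s ∈ B m ⊆ B↑(u) ∩ B↑(v)`.
-/
open SimpleGraph

namespace SimpleGraph

variable {ι : Type*} {G T : SimpleGraph ι}

theorem Walk.IsPath.append {a b c : ι} {p : G.Walk a b} {q : G.Walk b c} (hp : p.IsPath)
    (hq : q.IsPath) (h : ∀ x ∈ p.support, x ∈ q.support → x = b) : (p.append q).IsPath := by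
  rw [Walk.isPath_def, Walk.support_append]
  refine hp.support_nodup.append hq.support_nodup.tail fun x hxp hxq => ?_
  obtain rfl := h x hxp (List.mem_of_mem_tail hxq)
  have hnd := hq.support_nodup
  rw [← q.cons_tail_support, List.nodup_cons] at hnd
  exact hnd.1 hxq

theorem forall_mem_support_of_notMem_support {m x y b : ι}
    (hx : ∀ w : G.Walk x b, m ∈ w.support) (p : G.Walk x y) (hp : m ∉ p.support) :
    ∀ w : G.Walk y b, m ∈ w.support := fun w =>
  ((Walk.mem_support_append_iff p w).mp (hx (p.append w))).resolve_left hp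

namespace IsTree

theorem eq_of_isPath (hT : T.IsTree) {a b : ι} {p q : T.Walk a b} (hp : p.IsPath)
    (hq : q.IsPath) : p = q :=
  Subtype.ext_iff.mp ((hT.isAcyclic.subsingleton_path a b).elim ⟨p, hp⟩ ⟨q, hq⟩)

theorem length_eq_dist_of_isPath (hT : T.IsTree) {a b : ι} {p : T.Walk a b} (hp : p.IsPath) :
    p.length = T.dist a b := by
  obtain ⟨q, hq, hlen⟩ := hT.connected.exists_path_of_dist a b
  rw [← hlen, hT.eq_of_isPath hp hq]

theorem mem_support_of_mem_support_isPath (hT : T.IsTree) {a b m : ι} {p : T.Walk a b}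
    (hp : p.IsPath) (hm : m ∈ p.support) (w : T.Walk a b) : m ∈ w.support := by
  rw [hT.eq_of_isPath hp w.bypass_isPath] at hm
  exact w.support_bypass_subset_support hm

theorem isAnc_of_isPath_of_forall_dist_le (hT : T.IsTree) (r : ι) {a b m : ι} {p : T.Walk a b}
    (hp : p.IsPath) (hm : m ∈ p.support) (hmin : ∀ t ∈ p.support, T.dist r m ≤ T.dist r t) :
    IsAnc T r m a := by
  obtain ⟨q, hq, hqlen⟩ := hT.connected.exists_path_of_dist r m
  set p' := (p.takeUntil m hm).reverse
  have hp' : p'.IsPath := (hp.takeUntil hm).reverse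
  have hqp' : (q.append p').IsPath := by
    refine hq.append hp' fun t htq htp' => ?_
    by_contra htm
    have htp : t ∈ p.support := by
      rw [Walk.support_reverse, List.mem_reverse] at htp'
      exact p.support_takeUntil_subset_support hm htp'
    have hlt : T.dist r t < T.dist r m :=
      calc T.dist r t ≤ (q.takeUntil t htq).length := T.dist_le _
        _ < q.length := Walk.length_takeUntil_lt_length htq htm
        _ = T.dist r m := hqlen
    exact (hmin t htp).not_gt hlt
  have hlen := hT.length_eq_dist_of_isPath hqp'
  rw [Walk.length_append, hqlen, hT.length_eq_dist_of_isPath hp'] at hlen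
  exact hlen

theorem exists_isAnc_forall_mem_support (hT : T.IsTree) (r a b : ι) :
    ∃ m, IsAnc T r m a ∧ IsAnc T r m b ∧ ∀ w : T.Walk a b, m ∈ w.support := by
  obtain ⟨p, hp, -⟩ := hT.connected.exists_path_of_dist a b
  obtain ⟨m, hm, hmin⟩ := Set.exists_min_image {t | t ∈ p.support} (T.dist r)
    p.support.finite_toSet ⟨a, p.start_mem_support⟩
  have hm' : m ∈ p.reverse.support := by rwa [Walk.support_reverse, List.mem_reverse]
  refine ⟨m, hT.isAnc_of_isPath_of_forall_dist_le r hp hm hmin,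
    hT.isAnc_of_isPath_of_forall_dist_le r hp.reverse hm' ?_,
    hT.mem_support_of_mem_support_isPath hp hm⟩
  intro t ht
  rw [Walk.support_reverse, List.mem_reverse] at ht
  exact hmin t ht

end IsTree

end SimpleGraph

section Distance

variable {V : Type*} (c : V → V → ℕ∞)

theorem pathCost_append_le (s v : V) (l₁ : List V) :
    ∀ (u : V) (l₂ : List V),
      pathCost c u (l₁ ++ l₂) v ≤ pathCost c u l₁ s + pathCost c s l₂ v := by
  induction l₁ with
  | nil =>
    intro u l₂
    by_cases h : u = s
    · subst h; simp [pathCost]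
    · simp [pathCost, h]
  | cons w l₁ ih =>
    intro u l₂
    rw [List.cons_append, pathCost, pathCost, add_assoc]
    exact add_le_add le_rfl (ih w l₂)

theorem pathCost_append_cons (s v : V) (l₁ : List V) :
    ∀ (u : V) (l₂ : List V),
      pathCost c u (l₁ ++ s :: l₂) v = pathCost c u (l₁ ++ [s]) s + pathCost c s l₂ v := by
  induction l₁ with
  | nil => intro u l₂; simp [pathCost]
  | cons w l₁ ih =>
    intro u l₂
    rw [List.cons_append, List.cons_append, pathCost, pathCost, ih w l₂, add_assoc]

theorem ddist_le_pathCost (u v : V) (l : List V) : ddist c u v ≤ pathCost c u l v :=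
  iInf_le _ l

theorem exists_pathCost_eq_ddist (u v : V) : ∃ l, pathCost c u l v = ddist c u v :=
  ciInf_mem _

theorem ddist_self (u : V) : ddist c u u = 0 :=
  le_antisymm (by simpa [pathCost] using ddist_le_pathCost c u u []) zero_le

theorem ddist_triangle (u s v : V) : ddist c u v ≤ ddist c u s + ddist c s v := by
  obtain ⟨l₁, h₁⟩ := exists_pathCost_eq_ddist c u s
  obtain ⟨l₂, h₂⟩ := exists_pathCost_eq_ddist c s v
  calc ddist c u v ≤ pathCost c u (l₁ ++ l₂) v := ddist_le_pathCost c u v _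
    _ ≤ pathCost c u l₁ s + pathCost c s l₂ v := pathCost_append_le c s v l₁ u l₂
    _ = ddist c u s + ddist c s v := by rw [h₁, h₂]

theorem ddist_add_ddist_le_pathCost {u v s : V} {l : List V} (hs : s ∈ u :: l) :
    ddist c u s + ddist c s v ≤ pathCost c u l v := by
  rcases List.mem_cons.mp hs with rfl | hsl
  · rw [ddist_self, zero_add]
    exact ddist_le_pathCost c s v l
  · obtain ⟨l₁, l₂, rfl⟩ := List.append_of_mem hsl
    rw [pathCost_append_cons]
    exact add_le_add (ddist_le_pathCost c u s _) (ddist_le_pathCost c s v _)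

theorem ddist_le_biInf (A : Set V) (u v : V) :
    ddist c u v ≤ ⨅ s ∈ A, ddist c u s + ddist c s v :=
  le_iInf₂ fun s _ => ddist_triangle c u s v

theorem biInf_le_ddist {S : Set V} {u v : V}
    (hS : ∀ l, pathCost c u l v ≠ ⊤ → ∃ s ∈ u :: l, s ∈ S) :
    ⨅ s ∈ S, ddist c u s + ddist c s v ≤ ddist c u v := by
  refine le_iInf fun l => ?_
  by_cases hl : pathCost c u l v = ⊤
  · rw [hl]; exact le_top
  · obtain ⟨s, hsl, hsS⟩ := hS l hl
    exact (iInf₂_le s hsS).trans (ddist_add_ddist_le_pathCost c hsl)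

theorem exists_mem_of_pathCost_ne_top {S : Set V} {Q : V → Prop} {v : V}
    (hstep : ∀ w w', c w w' ≠ ⊤ → w ∉ S → w' ∉ S → Q w → Q w') (hv : Q v → v ∈ S)
    (l : List V) : ∀ u, pathCost c u l v ≠ ⊤ → (u ∉ S → Q u) → ∃ s ∈ u :: l, s ∈ S := by
  induction l with
  | nil =>
    intro u hfin hu
    have huv : u = v := by by_contra h; simp [pathCost, h] at hfin
    subst huv
    exact ⟨u, List.mem_cons_self, by_contra fun huS => huS (hv (hu huS))⟩
  | cons w l ih =>
    intro u hfin hu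
    rw [pathCost, ne_eq, ENat.add_eq_top, not_or] at hfin
    by_cases huS : u ∈ S
    · exact ⟨u, List.mem_cons_self, huS⟩
    · obtain ⟨s, hs, hsS⟩ := ih w hfin.2 fun hwS => hstep u w hfin.1 huS hwS (hu huS)
      exact ⟨s, List.mem_cons_of_mem _ hs, hsS⟩

end Distance

section TreeDecomposition

variable {V ι : Type*} {T : SimpleGraph ι} {B : ι → Set V}

theorem forall_mem_support_of_mem_bag (hcon : ∀ u : V, (T.induce {x : ι | u ∈ B x}).Connected)
    {w : V} {m y₀ y b : ι} (hw : w ∉ B m) (hy₀ : w ∈ B y₀) (hy : w ∈ B y)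
    (hsep : ∀ p : T.Walk y₀ b, m ∈ p.support) : ∀ p : T.Walk y b, m ∈ p.support := by
  obtain ⟨W⟩ := (hcon w).preconnected ⟨y₀, hy₀⟩ ⟨y, hy⟩
  refine forall_mem_support_of_notMem_support hsep (W.map (Embedding.induce _).toHom) fun hm => ?_
  obtain ⟨⟨x, hx⟩, -, rfl⟩ := List.mem_map.mp (Walk.support_map _ W ▸ hm)
  exact hw hx

theorem exists_mem_bag_of_pathCost_ne_top (c : V → V → ℕ∞)
    (hb : ∀ u v : V, (underlyingGraph c).Adj u v → ∃ x : ι, u ∈ B x ∧ v ∈ B x)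
    (hcon : ∀ u : V, (T.induce {x : ι | u ∈ B x}).Connected) {m a b : ι}
    (hsep : ∀ p : T.Walk a b, m ∈ p.support) {u v : V} (hu : u ∈ B a) (hv : v ∈ B b)
    (l : List V) (hl : pathCost c u l v ≠ ⊤) : ∃ s ∈ u :: l, s ∈ B m := by
  set Q : V → Prop := fun w => ∀ y, w ∈ B y → ∀ p : T.Walk y b, m ∈ p.support
  have hstep : ∀ w w', c w w' ≠ ⊤ → w ∉ B m → w' ∉ B m → Q w → Q w' := by
    intro w w' hww' hw hw' hQ y hy
    by_cases heq : w = w'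
    · exact hQ y (heq ▸ hy)
    · obtain ⟨y₀, hwy₀, hw'y₀⟩ := hb w w' ⟨heq, Or.inl hww'⟩
      exact forall_mem_support_of_mem_bag hcon hw' hw'y₀ hy (hQ y₀ hwy₀)
  have hQv : Q v → v ∈ B m := fun hQ => by
    obtain rfl : m = b := by simpa using hQ b hv Walk.nil
    exact hv
  exact exists_mem_of_pathCost_ne_top c hstep hQv l u hl fun hu' y hy =>
    forall_mem_support_of_mem_bag hcon hu' hu hy hsep

end TreeDecomposition

theorem stmt3_general {V ι : Type*} (c : V → V → ℕ∞)
    (T : SimpleGraph ι) (hT : T.IsTree) (r : ι) (B : ι → Set V)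
    (hb : ∀ u v : V, (underlyingGraph c).Adj u v → ∃ x : ι, u ∈ B x ∧ v ∈ B x)
    (hcon : ∀ u : V, (T.induce {x : ι | u ∈ B x}).Connected)
    (u v : V) (su sv : ι)
    (hsu : u ∈ B su)
    (hsv : v ∈ B sv) :
    ddist c u v =
      ⨅ s ∈ {s : V | (∃ x : ι, IsAnc T r x su ∧ s ∈ B x) ∧
                     (∃ x : ι, IsAnc T r x sv ∧ s ∈ B x)},
        ddist c u s + ddist c s v := by
  obtain ⟨m, hm_su, hm_sv, hsep⟩ := hT.exists_isAnc_forall_mem_support r su sv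
  refine le_antisymm (ddist_le_biInf c _ u v) ?_
  calc _ ≤ ⨅ s ∈ B m, ddist c u s + ddist c s v :=
        biInf_mono fun s hs => ⟨⟨m, hm_su, hs⟩, ⟨m, hm_sv, hs⟩⟩
    _ ≤ ddist c u v :=
        biInf_le_ddist c (exists_mem_bag_of_pathCost_ne_top c hb hcon hsep hsu hsv)

/-- with a tree decomposition of the underlying graph of a weighted directed
graph, and `B↑(u)` the union of bags of the ancestors of the minimum-depth bag `St(u)`
containing `u`, the distance `d_G(u,v)` equals
`min_{s ∈ B↑(u) ∩ B↑(v)} d_G(u,s) + d_G(s,v)`. -/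
theorem stmt3 {V ι : Type*} [Fintype ι] (c : V → V → ℕ∞)
    (T : SimpleGraph ι) (hT : T.IsTree) (r : ι) (B : ι → Set V)
    (ha : ∀ v : V, ∃ x : ι, v ∈ B x)
    (hb : ∀ u v : V, (underlyingGraph c).Adj u v → ∃ x : ι, u ∈ B x ∧ v ∈ B x)
    (hcon : ∀ u : V, (T.induce {x : ι | u ∈ B x}).Connected)
    (u v : V) (su sv : ι)
    (hsu : u ∈ B su) (hsumin : ∀ y : ι, u ∈ B y → T.dist r su ≤ T.dist r y)
    (hsv : v ∈ B sv) (hsvmin : ∀ y : ι, v ∈ B y → T.dist r sv ≤ T.dist r y) :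
    ddist c u v =
      ⨅ s ∈ {s : V | (∃ x : ι, IsAnc T r x su ∧ s ∈ B x) ∧
                     (∃ x : ι, IsAnc T r x sv ∧ s ∈ B x)},
        ddist c u s + ddist c s v :=
  stmt3_general c T hT r B hb hcon u v su sv hsu hsv
end

section
/- Let G be a weighted directed multigraph and C a stateful walk constraint with state space Q, state function M, and transitions δ_e. Define the product graph G_C with vertex set V(G) × Q, an edge from (u,i) to (v,j) of weight c(e) for each edge e from u to v in G with δ_e(i) = j. Then for any s, t ∈ V(G), q ∈ Q \ {⊥}, and x ≥ 0: there exists a walk of total weight x from s to t in G with M(w) = q if and only if there exists a walk of total weight x from (s,▽) to (t,q) in G_C. -/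
/-! A walk `w` of `G` lifts uniquely to a walk of `G_C` starting in state `▽`: the state
attached to each edge is forced to be the one reached by the transitions `δ` along the
preceding edges. Since `δ_e (M w) = M (w ∘ e)` and `M [] = ▽`, running the transitions along
`w` from `▽` computes `M w`, so the lift of `w` ends in `(t, M w)`; conversely every walk of
`G_C` from `(s, ▽)` is the lift of its projection to `G`. Lifting preserves weights. -/

/-- A list of edges of a directed multigraph (with endpoint maps `src`, `tgt`) is a
walk from `s` to `t`: consecutive edges are compatible, a nonempty walk starts at `s`
and ends at `t`, and the empty walk requires `s = t`. -/
def IsWalkFrom {V E : Type*} (src tgt : E → V) (s t : V) (l : List E) : Prop :=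
  List.Chain' (fun a b => tgt a = src b) l ∧
  (∀ h : l ≠ [], src (l.head h) = s ∧ tgt (l.getLast h) = t) ∧
  (l = [] → s = t)

section Walks

variable {V E : Type*} {src tgt : E → V}

lemma isWalkFrom_iff {s t : V} {l : List E} :
    IsWalkFrom src tgt s t l ↔ List.IsChain (fun a b => tgt a = src b) l ∧
      (∀ h : l ≠ [], src (l.head h) = s ∧ tgt (l.getLast h) = t) ∧ (l = [] → s = t) :=
  Iff.rfl

@[simp]
lemma isWalkFrom_nil {s t : V} : IsWalkFrom src tgt s t [] ↔ s = t := by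
  simp [isWalkFrom_iff]

@[simp]
lemma isWalkFrom_cons {s t : V} {e : E} {l : List E} :
    IsWalkFrom src tgt s t (e :: l) ↔ src e = s ∧ IsWalkFrom src tgt (tgt e) t l := by
  cases l with
  | nil => simp [isWalkFrom_iff]
  | cons b l =>
    simp [isWalkFrom_iff, List.isChain_cons_cons]
    grind

end Walks

def runStates {E Q : Type*} (δ : E → Q → Q) (i : Q) (w : List E) : Q :=
  w.foldl (fun q e => δ e q) i

@[simp]
lemma runStates_nil {E Q : Type*} (δ : E → Q → Q) (i : Q) : runStates δ i [] = i := rfl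

@[simp]
lemma runStates_cons {E Q : Type*} (δ : E → Q → Q) (i : Q) (e : E) (w : List E) :
    runStates δ i (e :: w) = runStates δ (δ e i) w := rfl

lemma eq_runStates_of_isChain {E Q : Type*} {R : E → E → Prop} (M : List E → Q)
    (δ : E → Q → Q) (hδ : ∀ w e, List.IsChain R (w ++ [e]) → δ e (M w) = M (w ++ [e]))
    {w : List E} (hw : List.IsChain R w) : M w = runStates δ (M []) w := by
  induction w using List.reverseRecOn with
  | nil => rfl
  | append_singleton w e ih =>
    rw [← hδ w e hw, ih (hw.prefix ⟨[e], rfl⟩)]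
    simp [runStates]

def liftWalk {E Q : Type*} (δ : E → Q → Q) : Q → List E → List (E × Q)
  | _, [] => []
  | i, e :: w => (e, i) :: liftWalk δ (δ e i) w

section Lift

variable {V E Q : Type*} {src tgt : E → V} {δ : E → Q → Q}

@[simp]
lemma map_liftWalk {α : Type*} (f : E → α) (i : Q) (w : List E) :
    (liftWalk δ i w).map (fun p => f p.1) = w.map f := by
  induction w generalizing i with
  | nil => rfl
  | cons e w ih => simp [liftWalk, ih]

lemma isWalkFrom_liftWalk_iff {s t : V} {i q : Q} {w : List E} :
    IsWalkFrom (fun p : E × Q => (src p.1, p.2)) (fun p => (tgt p.1, δ p.1 p.2))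
        (s, i) (t, q) (liftWalk δ i w) ↔
      IsWalkFrom src tgt s t w ∧ runStates δ i w = q := by
  induction w generalizing s i with
  | nil => simp [liftWalk]
  | cons e w ih => simp [liftWalk, ih, and_assoc]

lemma eq_liftWalk_of_isWalkFrom {s t : V × Q} {w' : List (E × Q)}
    (hw' : IsWalkFrom (fun p : E × Q => (src p.1, p.2)) (fun p => (tgt p.1, δ p.1 p.2))
      s t w') : w' = liftWalk δ s.2 (w'.map Prod.fst) := by
  induction w' generalizing s with
  | nil => rfl
  | cons p w' ih =>
    obtain ⟨rfl, hrest⟩ := isWalkFrom_cons.1 hw'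
    simpa [liftWalk] using ih hrest

end Lift

theorem stmt6_general {V E Q : Type*} (src tgt : E → V) (c : E → ℕ) (C : Set (List E))
    (bot nab : Q) (M : List E → Q) (δ : E → Q → Q)
    (h1 : ∀ w : List E, List.Chain' (fun a b => tgt a = src b) w →
      ((M w ≠ bot ↔ w ∈ C) ∧ (M w = nab ↔ w = [])))
    (h2 : ∀ (w : List E) (e : E), List.Chain' (fun a b => tgt a = src b) (w ++ [e]) →
      δ e (M w) = M (w ++ [e]))
    (s t : V) (q : Q) (x : ℕ) :
    (∃ w : List E, IsWalkFrom src tgt s t w ∧ M w = q ∧ (w.map c).sum = x) ↔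
    (∃ w' : List (E × Q),
      IsWalkFrom (fun p => (src p.1, p.2)) (fun p => (tgt p.1, δ p.1 p.2))
        (s, nab) (t, q) w' ∧ (w'.map (fun p => c p.1)).sum = x) := by
  have hM (w : List E) (hw : IsWalkFrom src tgt s t w) : M w = runStates δ nab w := by
    rw [eq_runStates_of_isChain M δ h2 hw.1, (h1 [] List.IsChain.nil).2.2 rfl]
  constructor
  · rintro ⟨w, hw, rfl, rfl⟩
    refine ⟨liftWalk δ nab w, isWalkFrom_liftWalk_iff.2 ⟨hw, (hM w hw).symm⟩, ?_⟩
    rw [map_liftWalk]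
  · rintro ⟨w', hw', rfl⟩
    have hlift : w' = liftWalk δ nab (w'.map Prod.fst) := eq_liftWalk_of_isWalkFrom hw'
    rw [hlift] at hw' ⊢
    obtain ⟨hw, hq⟩ := isWalkFrom_liftWalk_iff.1 hw'
    exact ⟨_, hw, (hM _ hw).trans hq, by rw [map_liftWalk]⟩

/-- for a weighted directed multigraph with a stateful walk constraint,
there is a walk of weight `x` from `s` to `t` with state `q ≠ ⊥` iff there is a walk
of weight `x` from `(s,▽)` to `(t,q)` in the product graph `G_C` (whose edges are
pairs `(e,i)` from `(src e, i)` to `(tgt e, δ_e i)` of weight `c e`). -/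
theorem stmt6 {V E Q : Type*} (src tgt : E → V) (c : E → ℕ) (C : Set (List E))
    (bot nab : Q) (M : List E → Q) (δ : E → Q → Q)
    (hphi : ([] : List E) ∈ C)
    (h1 : ∀ w : List E, List.Chain' (fun a b => tgt a = src b) w →
      ((M w ≠ bot ↔ w ∈ C) ∧ (M w = nab ↔ w = [])))
    (h2 : ∀ (w : List E) (e : E), List.Chain' (fun a b => tgt a = src b) (w ++ [e]) →
      δ e (M w) = M (w ++ [e]))
    (h3 : ∀ e : E, δ e bot = bot)
    (s t : V) (q : Q) (hq : q ≠ bot) (x : ℕ) :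
    (∃ w : List E, IsWalkFrom src tgt s t w ∧ M w = q ∧ (w.map c).sum = x) ↔
    (∃ w' : List (E × Q),
      IsWalkFrom (fun p => (src p.1, p.2)) (fun p => (tgt p.1, δ p.1 p.2))
        (s, nab) (t, q) w' ∧ (w'.map (fun p => c p.1)).sum = x) :=
  stmt6_general src tgt c C bot nab M δ h1 h2 s t q x
end

section
/- Let G be a graph, M a matching in G, u and v two distinct unmatched vertices. If there exists an alternating walk from u to v (a walk whose edges alternate between non-matching and matching edges, starting and ending with a non-matching edge) in a bipartite graph G, then there exists an alternating simple path (augmenting path) from u to v, and augmenting along it yields a matching of size |M| + 1. -/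
/-- A matching of `G` given as a set of edges: edges of `G`, pairwise vertex-disjoint. -/
def IsMatchingSet {V : Type*} (G : SimpleGraph V) (M : Set (Sym2 V)) : Prop :=
  M ⊆ G.edgeSet ∧ ∀ e ∈ M, ∀ e' ∈ M, e ≠ e' → ∀ x, x ∈ e → x ∉ e'

/-- Edges alternate between non-matching and matching edges. -/
def IsAltEdges {V : Type*} (M : Set (Sym2 V)) (l : List (Sym2 V)) : Prop :=
  List.Chain' (fun a b => ¬((a ∈ M) ↔ (b ∈ M))) l

/-- The first and last edge of the list are non-matching edges. -/
def EndsNotMatched {V : Type*} (M : Set (Sym2 V)) (l : List (Sym2 V)) : Prop :=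
  ∀ h : l ≠ [], l.head h ∉ M ∧ l.getLast h ∉ M

/-!
Fix a 2-colouring `c` of `G`. Along an alternating walk from `u` that starts with an unmatched
edge, the edge at position `i` leaves a vertex of colour `c u` exactly when `i` is even, so it is
matched exactly when it is traversed out of the colour class not containing `u`. This is a
property of each dart separately, hence it passes to the path obtained by short-cutting the walk,
whose darts are among those of the walk: the path is again alternating.

On an alternating path between unmatched vertices the unmatched edges are pairwise disjoint and
every vertex of the path that is matched at all is matched by an edge of the path, so swapping
matched and unmatched path edges gives a matching; it gains one edge because an alternating path
of odd length has one more unmatched than matched edge.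
-/

open SimpleGraph

def MatchedAtOdd {α : Type*} (M : Set α) (l : List α) : Prop :=
  ∀ i (h : i < l.length), l[i] ∈ M ↔ Odd i

theorem Set.ncard_symmDiff_eq_add_one {α : Type*} {M P : Set α} (hM : M.Finite) (hP : P.Finite)
    (h : (P ∩ M).ncard + 1 = (P \ M).ncard) : (symmDiff M P).ncard = M.ncard + 1 := by
  rw [Set.symmDiff_def, Set.ncard_union_eq disjoint_sdiff_sdiff hM.sdiff hP.sdiff, ← h,
    ← Set.ncard_inter_add_ncard_sdiff_eq_ncard M P hM, Set.inter_comm]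
  omega

section Lists

variable {α : Type*} {M : Set α}

theorem matchedAtOdd_cons_cons {a b : α} {l : List α} :
    MatchedAtOdd M (a :: b :: l) ↔ a ∉ M ∧ b ∈ M ∧ MatchedAtOdd M l := by
  constructor
  · intro h
    refine ⟨fun ha => Nat.not_odd_zero ((h 0 (by simp)).1 ha), (h 1 (by simp)).2 odd_one,
      fun i hi => ?_⟩
    have := h (i + 2) (by simpa using hi)
    rwa [List.getElem_cons_succ, List.getElem_cons_succ, Nat.odd_add_one, Nat.odd_add_one,
      not_not] at this
  · rintro ⟨ha, hb, hl⟩ (_ | _ | i) hi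
    · simpa using ha
    · simpa using hb
    · simpa [Nat.odd_add_one] using hl i (by simpa using hi)

theorem MatchedAtOdd.length_filter_mem_add_one [DecidablePred (· ∈ M)] :
    ∀ {l : List α}, MatchedAtOdd M l → Odd l.length →
      (l.filter (· ∈ M)).length + 1 = (l.filter (· ∉ M)).length
  | [], _, hodd => absurd hodd (by simp)
  | [a], h, _ => by
    have ha : a ∉ M := fun ha => Nat.not_odd_zero ((h 0 (by simp)).1 ha)
    simp [ha]
  | a :: b :: l, h, hodd => by
    obtain ⟨ha, hb, hl⟩ := matchedAtOdd_cons_cons.1 h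
    have := hl.length_filter_mem_add_one (by simpa [Nat.odd_add_one] using hodd)
    simp [ha, hb, this]

theorem MatchedAtOdd.ncard_inter_add_one {l : List α} (h : MatchedAtOdd M l) (hl : l.Nodup)
    (hodd : Odd l.length) :
    ({e | e ∈ l} ∩ M).ncard + 1 = ({e | e ∈ l} \ M).ncard := by
  classical
  have hcard : ∀ p : α → Bool, {e | e ∈ l.filter p}.ncard = (l.filter p).length := fun p => by
    rw [← List.coe_toFinset, Set.ncard_coe_finset, List.toFinset_card_of_nodup (hl.filter p)]
  have hinter : {e | e ∈ l} ∩ M = {e | e ∈ l.filter (· ∈ M)} := by ext; simp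
  have hdiff : {e | e ∈ l} \ M = {e | e ∈ l.filter (· ∉ M)} := by ext; simp
  rw [hinter, hdiff, hcard, hcard]
  exact h.length_filter_mem_add_one hodd

end Lists

theorem matchedAtOdd_iff_isAltEdges {V : Type*} {M : Set (Sym2 V)} {l : List (Sym2 V)} :
    MatchedAtOdd M l ↔ IsAltEdges M l ∧ ∀ h : l ≠ [], l.head h ∉ M := by
  rw [show IsAltEdges M l ↔ l.IsChain (fun a b => ¬(a ∈ M ↔ b ∈ M)) from Iff.rfl,
    List.isChain_iff_getElem]
  constructor
  · intro h
    refine ⟨fun i hi => ?_, fun hl => ?_⟩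
    · rw [h i, h (i + 1), Nat.odd_add_one]
      exact iff_not_self
    · rw [List.head_eq_getElem, h 0]
      exact Nat.not_odd_zero
  · rintro ⟨halt, hhead⟩ i hi
    induction i with
    | zero => simpa [List.head_eq_getElem] using hhead (List.ne_nil_of_length_pos hi)
    | succ i ih =>
      have := halt i hi
      rw [Nat.odd_add_one, ← ih (by omega)]
      tauto

theorem MatchedAtOdd.endsNotMatched {V : Type*} {M : Set (Sym2 V)} {l : List (Sym2 V)}
    (h : MatchedAtOdd M l) (hodd : Odd l.length) : EndsNotMatched M l := by
  intro hl
  rw [List.head_eq_getElem, List.getLast_eq_getElem, h, h]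
  obtain ⟨k, hk⟩ := hodd
  refine ⟨Nat.not_odd_zero, ?_⟩
  rw [hk, Nat.add_sub_cancel, Nat.not_odd_iff_even]
  exact even_two_mul k

section Matching

variable {V : Type*} {G : SimpleGraph V} {M : Set (Sym2 V)}

theorem IsMatchingSet.eq_of_mem_of_mem {x : V} {e f : Sym2 V} (hM : IsMatchingSet G M) (he : e ∈ M)
    (hf : f ∈ M) (hxe : x ∈ e) (hxf : x ∈ f) : e = f :=
  by_contra fun hef => hM.2 e he f hf hef x hxe hxf

theorem IsMatchingSet.symmDiff {P : Set (Sym2 V)} (hM : IsMatchingSet G M) (hP : P ⊆ G.edgeSet)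
    (hdisj : ∀ e ∈ P \ M, ∀ e' ∈ P \ M, e ≠ e' → ∀ x ∈ e, x ∉ e')
    (hcover : ∀ e ∈ P \ M, ∀ x ∈ e, ∀ f ∈ M, x ∈ f → f ∈ P) :
    IsMatchingSet G (symmDiff M P) := by
  refine ⟨fun e he => ?_, fun e he e' he' hne x hxe hxe' => ?_⟩
  · rcases he with ⟨he, -⟩ | ⟨he, -⟩
    exacts [hM.1 he, hP he]
  · rcases he with ⟨heM, heP⟩ | heP <;> rcases he' with ⟨he'M, he'P⟩ | he'P
    · exact hM.2 e heM e' he'M hne x hxe hxe'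
    · exact heP (hcover e' he'P x hxe' e heM hxe)
    · exact he'P (hcover e heP x hxe e' he'M hxe')
    · exact hdisj e heP e' he'P hne x hxe hxe'

end Matching

namespace SimpleGraph

variable {V : Type*} {G : SimpleGraph V} {M : Set (Sym2 V)} {u v x : V} {i j k : ℕ}

theorem Coloring.color_getVert_eq_iff_even (c : G.Coloring Bool) (p : G.Walk u v)
    (hk : k ≤ p.length) : c (p.getVert k) = c u ↔ Even k := by
  have := c.even_length_iff_congr (p.take k)
  rw [Walk.take_length, min_eq_left hk] at this
  rw [this]
  cases c u <;> cases c (p.getVert k) <;> simp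

namespace Walk

theorem mem_edges_getElem_iff (p : G.Walk u v) (hi : i < p.edges.length) :
    x ∈ p.edges[i] ↔ x = p.getVert i ∨ x = p.getVert (i + 1) := by
  rw [getElem_edges_eq_edge_getElem_darts, darts_getElem_eq_getVert, Dart.edge_mk, Sym2.mem_iff]

theorem IsPath.le_succ_of_mem_edges_getElem {p : G.Walk u v} (hp : p.IsPath)
    (hi : i < p.edges.length) (hj : j < p.edges.length) (hxi : x ∈ p.edges[i])
    (hxj : x ∈ p.edges[j]) : i ≤ j + 1 := by
  have hlen := p.length_edges
  obtain ⟨k, hk, rfl⟩ : ∃ k, (k = i ∨ k = i + 1) ∧ p.getVert k = x := by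
    rcases (p.mem_edges_getElem_iff hi).1 hxi with h | h
    exacts [⟨i, .inl rfl, h.symm⟩, ⟨i + 1, .inr rfl, h.symm⟩]
  obtain ⟨l, hl, hkl⟩ : ∃ l, (l = j ∨ l = j + 1) ∧ p.getVert l = p.getVert k := by
    rcases (p.mem_edges_getElem_iff hj).1 hxj with h | h
    exacts [⟨j, .inl rfl, h.symm⟩, ⟨j + 1, .inr rfl, h.symm⟩]
  have := hp.getVert_injOn (by simp only [Set.mem_ofPred_eq]; omega)
    (by simp only [Set.mem_ofPred_eq]; omega) hkl
  omega

theorem matchedAtOdd_edges_iff (c : G.Coloring Bool) (p : G.Walk u v) :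
    MatchedAtOdd M p.edges ↔ ∀ d ∈ p.darts, (d.edge ∈ M ↔ c d.fst ≠ c u) := by
  have key : ∀ i (hi : i < p.darts.length), (p.darts[i].edge ∈ M ↔ c p.darts[i].fst ≠ c u) ↔
      (p.edges[i]'(by simpa using hi) ∈ M ↔ Odd i) := fun i hi => by
    rw [edge_getElem_darts, darts_getElem_eq_getVert, ne_eq,
      c.color_getVert_eq_iff_even p (by simp at hi; omega), Nat.not_even_iff_odd]
  constructor
  · intro h d hd
    obtain ⟨i, hi, rfl⟩ := List.mem_iff_getElem.1 hd
    exact (key i hi).2 (h i _)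
  · intro h i hi
    exact (key i (by simpa using hi)).1 (h _ (List.getElem_mem _))

theorem exists_isPath_matchedAtOdd (hG : G.Colorable 2) (w : G.Walk u v)
    (hw : MatchedAtOdd M w.edges) : ∃ p : G.Walk u v, p.IsPath ∧ MatchedAtOdd M p.edges := by
  classical
  obtain ⟨c⟩ := hG
  let c' := G.recolorOfEquiv finTwoEquiv c
  rw [matchedAtOdd_edges_iff c'] at hw
  exact ⟨w.bypass, w.bypass_isPath,
    (matchedAtOdd_edges_iff c' _).2 fun d hd => hw d (w.darts_bypass_subset_darts hd)⟩

theorem odd_length_of_matchedAtOdd {p : G.Walk u v} (hp : MatchedAtOdd M p.edges)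
    (hv : ∀ e ∈ M, v ∉ e) (huv : u ≠ v) : Odd p.length := by
  have hpos : 0 < p.length := Nat.pos_of_ne_zero fun h => huv (p.eq_of_length_eq_zero h)
  have hi : p.length - 1 < p.edges.length := by simp only [length_edges]; omega
  have hvmem : v ∈ p.edges[p.length - 1] :=
    (p.mem_edges_getElem_iff hi).2 (.inr (by rw [Nat.sub_add_cancel hpos, getVert_length]))
  obtain ⟨k, hk⟩ := Nat.not_odd_iff_even.1 fun h => hv _ ((hp _ hi).2 h) hvmem
  exact ⟨k, by omega⟩

theorem mem_edges_of_mem_support_of_matchedAtOdd (hM : IsMatchingSet G M) (hu : ∀ e ∈ M, u ∉ e)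
    (hv : ∀ e ∈ M, v ∉ e) {p : G.Walk u v} (hp : MatchedAtOdd M p.edges) (hx : x ∈ p.support)
    {f : Sym2 V} (hf : f ∈ M) (hxf : x ∈ f) : f ∈ p.edges := by
  obtain ⟨k, rfl, hk⟩ := mem_support_iff_exists_getVert.1 hx
  have hk0 : k ≠ 0 := by rintro rfl; exact hu f hf (by simpa using hxf)
  have hkl : k ≠ p.length := by rintro rfl; exact hv f hf (by simpa using hxf)
  obtain ⟨j, hj, hodd, hkj⟩ :
      ∃ j, ∃ hj : j < p.edges.length, Odd j ∧ p.getVert k ∈ p.edges[j] := by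
    rcases Nat.even_or_odd k with ⟨m, hm⟩ | hodd
    · refine ⟨k - 1, by simp only [length_edges]; omega, ⟨m - 1, by omega⟩, ?_⟩
      exact (p.mem_edges_getElem_iff _).2 (.inr (by rw [Nat.sub_add_cancel (by omega)]))
    · exact ⟨k, by simp only [length_edges]; omega, hodd,
        (p.mem_edges_getElem_iff _).2 (.inl rfl)⟩
  rw [hM.eq_of_mem_of_mem hf ((hp j hj).2 hodd) hxf hkj]
  exact List.getElem_mem hj

theorem IsPath.isMatchingSet_symmDiff (hM : IsMatchingSet G M) (hu : ∀ e ∈ M, u ∉ e)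
    (hv : ∀ e ∈ M, v ∉ e) {p : G.Walk u v} (hp : p.IsPath) (hpM : MatchedAtOdd M p.edges) :
    IsMatchingSet G (symmDiff M {e | e ∈ p.edges}) := by
  refine hM.symmDiff p.edges_subset_edgeSet ?_ ?_
  · rintro e ⟨he, heM⟩ e' ⟨he', he'M⟩ hne x hxe hxe'
    obtain ⟨i, hi, rfl⟩ := List.mem_iff_getElem.1 he
    obtain ⟨j, hj, rfl⟩ := List.mem_iff_getElem.1 he'
    have hij : i ≠ j := by rintro rfl; exact hne rfl
    have := hp.le_succ_of_mem_edges_getElem hi hj hxe hxe'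
    have := hp.le_succ_of_mem_edges_getElem hj hi hxe' hxe
    rw [hpM, Nat.not_odd_iff_even] at heM he'M
    obtain ⟨a, ha⟩ := heM
    obtain ⟨b, hb⟩ := he'M
    omega
  · rintro e ⟨he, -⟩ x hxe f hf hxf
    exact mem_edges_of_mem_support_of_matchedAtOdd hM hu hv hpM
      (p.mem_support_of_mem_edges he hxe) hf hxf

end Walk
end SimpleGraph

/-- in a bipartite graph `G` with matching `M` and distinct unmatched
vertices `u, v`, if there is an alternating walk from `u` to `v` starting and ending
with non-matching edges, then there is an augmenting (alternating simple) path from `u`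
to `v`, and augmenting along it yields a matching of size `|M| + 1`. -/
theorem stmt14 {V : Type*} [Fintype V] (G : SimpleGraph V) (hbip : G.Colorable 2)
    (M : Set (Sym2 V)) (hM : IsMatchingSet G M)
    (u v : V) (huv : u ≠ v)
    (hu : ∀ e ∈ M, u ∉ e) (hv : ∀ e ∈ M, v ∉ e)
    (w : G.Walk u v) (halt : IsAltEdges M w.edges) (hends : EndsNotMatched M w.edges) :
    ∃ p : G.Walk u v, p.IsPath ∧ IsAltEdges M p.edges ∧ EndsNotMatched M p.edges ∧
      IsMatchingSet G (symmDiff M {e | e ∈ p.edges}) ∧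
      (symmDiff M {e | e ∈ p.edges}).ncard = M.ncard + 1 := by
  have hw : MatchedAtOdd M w.edges :=
    matchedAtOdd_iff_isAltEdges.2 ⟨halt, fun h => (hends h).1⟩
  obtain ⟨p, hp, hpM⟩ := Walk.exists_isPath_matchedAtOdd hbip w hw
  have hodd : Odd p.edges.length := by
    simpa using Walk.odd_length_of_matchedAtOdd hpM hv huv
  refine ⟨p, hp, (matchedAtOdd_iff_isAltEdges.1 hpM).1, hpM.endsNotMatched hodd,
    Walk.IsPath.isMatchingSet_symmDiff hM hu hv hp hpM, ?_⟩
  exact Set.ncard_symmDiff_eq_add_one M.toFinite p.edges.finite_toSet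
    (hpM.ncard_inter_add_one hp.edges_nodup hodd)
end
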